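/- Let S and T be commuting bounded linear operators on a complex Banach space X such that σ(S+T) ⊂ ℝ and σ(S−T) ⊂ iℝ. Then for every polynomial p in two variables, σ(p(S,T)) = {p(λ, conj(λ)) : λ ∈ σ(S)}. -/

import Mathlib

/-!
The double commutant `B` of `{S, T}` is a closed commutative subalgebra of `L(X)` that is closed
under inversion, so the spectrum of any of its elements is the same in `B` as in `L(X)`, and by
Gelfand theory it is the set of values of the characters of `B` at that element. For a character
`φ`, `φ S + φ T ∈ σ(S + T) ⊆ ℝ` and `φ S - φ T ∈ σ(S - T) ⊆ iℝ` force `φ T = conj (φ S)`; hence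
`φ (p(S, T)) = p(φ S, conj (φ S))`, and `φ S` ranges over `σ(S)`.
-/

open WeakDual

lemma Complex.eq_conj_of_im_add_eq_zero_of_re_sub_eq_zero {a b : ℂ} (hadd : (a + b).im = 0)
    (hsub : (a - b).re = 0) : b = (starRingEnd ℂ) a := by
  simp only [Complex.add_im, Complex.sub_re] at hadd hsub
  apply Complex.ext <;> simp only [Complex.conj_re, Complex.conj_im] <;> linarith

lemma AlgHom.map_finsuppSum_smul_pow_mul_pow {R A B : Type*} [CommSemiring R] [Semiring A]
    [Semiring B] [Algebra R A] [Algebra R B] (f : A →ₐ[R] B) (p : (ℕ × ℕ) →₀ R) (x y : A) :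
    f (p.sum fun ij c => c • (x ^ ij.1 * y ^ ij.2)) =
      p.sum fun ij c => c • (f x ^ ij.1 * f y ^ ij.2) := by
  simp only [map_finsuppSum, map_smul, map_mul, map_pow]

lemma spectrum_eq_range_algHom_apply {A : Type*} [NormedCommRing A] [NormedAlgebra ℂ A]
    [CompleteSpace A] (a : A) : spectrum ℂ a = Set.range fun φ : A →ₐ[ℂ] ℂ => φ a := by
  ext z
  rw [CharacterSpace.mem_spectrum_iff_exists, ← CharacterSpace.equivAlgHom.symm.exists_congr_right]
  rfl

namespace Subalgebra

variable {R A : Type*} [CommRing R] [Ring A] [Algebra R A] {s : Set A}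

lemma isUnit_centralizer_iff {a : centralizer R s} : IsUnit a ↔ IsUnit (a : A) := by
  refine ⟨fun h => h.map (centralizer R s).val, fun ⟨u, hu⟩ => ?_⟩
  have hinv : (↑u⁻¹ : A) ∈ centralizer R s := (mem_centralizer_iff R).mpr fun g hg =>
    Commute.units_inv_right (hu ▸ (mem_centralizer_iff R).mp a.2 g hg)
  refine ⟨⟨a, ⟨_, hinv⟩, ?_, ?_⟩, rfl⟩ <;> ext <;> simp [← hu]

lemma spectrum_centralizer_eq (a : centralizer R s) : spectrum R (a : A) = spectrum R a := by
  ext r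
  simp only [spectrum.mem_iff, isUnit_centralizer_iff]
  rfl

lemma subset_centralizer_centralizer : s ⊆ centralizer R (centralizer R s : Set A) := by
  simpa only [coe_centralizer] using Set.subset_centralizer_centralizer

end Subalgebra

section DoubleCentralizer

open Subalgebra

variable {A : Type*} [NormedRing A] [NormedAlgebra ℂ A] [CompleteSpace A] {s : Set A}

lemma spectrum_eq_range_algHom_centralizer_centralizer (hs : ∀ a ∈ s, ∀ b ∈ s, a * b = b * a)
    (b : centralizer ℂ (centralizer ℂ s : Set A)) :
    spectrum ℂ (b : A) =
      Set.range fun φ : centralizer ℂ (centralizer ℂ s : Set A) →ₐ[ℂ] ℂ => φ b := by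
  set B := centralizer ℂ (centralizer ℂ s : Set A)
  let : NormedCommRing B :=
    { (inferInstance : NormedRing B) with
      mul_comm := fun x y => Subtype.ext <| by
        apply Set.centralizer_centralizer_comm_of_comm hs <;> simp only [← coe_centralizer ℂ]
        exacts [x.2, y.2] }
  have : CompleteSpace B := (Set.isClosed_centralizer _).completeSpace_coe
  rw [spectrum_centralizer_eq, spectrum_eq_range_algHom_apply]

end DoubleCentralizer

/-- For commuting bounded operators `S`, `T` on a complex Banach space with
`σ(S+T) ⊂ ℝ` and `σ(S−T) ⊂ iℝ`, for every polynomial `p` in two variables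
`σ(p(S,T)) = {p(λ, conj λ) : λ ∈ σ(S)}`. -/
theorem stmt1 {X : Type*} [NormedAddCommGroup X] [NormedSpace ℂ X] [CompleteSpace X]
    (S T : X →L[ℂ] X) (hST : S * T = T * S)
    (hreal : ∀ z ∈ spectrum ℂ (S + T), z.im = 0)
    (himag : ∀ z ∈ spectrum ℂ (S - T), z.re = 0)
    (p : (ℕ × ℕ) →₀ ℂ) :
    spectrum ℂ (p.sum fun ij c => c • (S ^ ij.1 * T ^ ij.2)) =
      {z : ℂ | ∃ l ∈ spectrum ℂ S,
        z = p.sum fun ij c => c * l ^ ij.1 * (starRingEnd ℂ l) ^ ij.2} := by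
  set B := Subalgebra.centralizer ℂ (Subalgebra.centralizer ℂ {S, T} : Set (X →L[ℂ] X))
  have hcomm : ∀ a ∈ ({S, T} : Set (X →L[ℂ] X)), ∀ b ∈ ({S, T} : Set (X →L[ℂ] X)),
      a * b = b * a := by
    rintro _ (rfl | rfl) _ (rfl | rfl) <;> simp [hST]
  have hspec := spectrum_eq_range_algHom_centralizer_centralizer hcomm
  let S' : B := ⟨S, Subalgebra.subset_centralizer_centralizer (by simp)⟩
  let T' : B := ⟨T, Subalgebra.subset_centralizer_centralizer (by simp)⟩
  have hconj (φ : B →ₐ[ℂ] ℂ) : φ T' = starRingEnd ℂ (φ S') := by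
    refine Complex.eq_conj_of_im_add_eq_zero_of_re_sub_eq_zero (hreal _ ?_) (himag _ ?_)
    · exact (hspec (S' + T')).ge ⟨φ, φ.map_add S' T'⟩
    · exact (hspec (S' - T')).ge ⟨φ, φ.map_sub S' T'⟩
  have hP : ((p.sum fun ij c => c • (S' ^ ij.1 * T' ^ ij.2) : B) : X →L[ℂ] X) =
      p.sum fun ij c => c • (S ^ ij.1 * T ^ ij.2) :=
    B.val.map_finsuppSum_smul_pow_mul_pow p S' T'
  rw [← hP, hspec, show spectrum ℂ S = _ from hspec S']
  ext z
  simp only [Set.mem_range, Set.mem_ofPred_eq, exists_exists_eq_and,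
    AlgHom.map_finsuppSum_smul_pow_mul_pow, hconj, smul_eq_mul, mul_assoc]
  exact exists_congr fun _ => eq_comm
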